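/- arXiv:1309.2150 — 6 statements merged into one kernel-verified Lean document; each statement's English description precedes it below -/
import Mathlib

section
/- Let P(Z) = Z^n + ã2 Z^{n-2} + ⋯ + ãn be a monic real polynomial of degree n in Tschirnhausen form all of whose roots are real. Then |ãi|^{1/i} ≤ √2 · |ã2|^{1/2} for all i = 2,…,n. -/
/-! With `s = √(∑ λⱼ²)`, every root satisfies `|λⱼ| ≤ s`, so the power sums obey `|pₖ| ≤ s ^ k`
for `k ≥ 2`; in Tschirnhausen form also `p₁ = 0`. Newton's identities `k eₖ = ±∑ ±eₐ pₖ₋ₐ`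
(`a < k`) then give `|eₖ| ≤ s ^ k` by strong induction, while `e₂ = -s² / 2`. Since
`ãₖ = (-1)ᵏ eₖ`, this is `|ãₖ| ^ (1 / k) ≤ s = √2 |ã₂| ^ (1 / 2)`. -/

open Polynomial

open Finset in
theorem Finset.card_filter_antidiagonal_fst_lt (k : ℕ) :
    #{a ∈ antidiagonal k | a.1 < k} = k := by
  have h : {a ∈ antidiagonal k | a.1 < k} = (antidiagonal k).erase (k, 0) := by
    ext a
    simp only [mem_filter, mem_erase, HasAntidiagonal.mem_antidiagonal, Prod.ext_iff, Ne, not_and]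
    omega
  rw [h, card_erase_of_mem (by simp), Nat.card_antidiagonal, Nat.add_sub_cancel]

theorem Polynomial.coeff_prod_X_sub_C_card_sub {σ R : Type*} [Fintype σ] [CommRing R]
    (x : σ → R) {i : ℕ} (hi : i ≤ Fintype.card σ) :
    (∏ j, (X - C (x j))).coeff (Fintype.card σ - i) =
      (-1) ^ i * MvPolynomial.eval x (MvPolynomial.esymm σ R i) := by
  have hprod : ∏ j, (X - C (x j)) = ((Finset.univ.val.map x).map fun t => X - C t).prod := by
    rw [Multiset.map_map]; rfl
  have hcard : Multiset.card (Finset.univ.val.map x) = Fintype.card σ := by simp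
  rw [hprod, Multiset.prod_X_sub_C_coeff _ (hcard ▸ Nat.sub_le _ _), hcard,
    Nat.sub_sub_self hi, Finset.esymm_map_val]
  simp [MvPolynomial.esymm]

namespace MvPolynomial

open Finset

variable {σ : Type*} [Fintype σ]

theorem two_mul_esymm_two (R : Type*) [CommRing R] :
    2 * esymm σ R 2 = psum σ R 1 ^ 2 - psum σ R 2 := by
  have newton := mul_esymm_eq_sum σ R 2
  have hpairs : {a ∈ antidiagonal 2 | a.1 < 2} = {(0, 2), (1, 1)} := by decide
  rw [hpairs, sum_pair (by decide), esymm_zero, esymm_one, ← psum_one] at newton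
  push_cast at newton
  linear_combination newton

theorem abs_eval_psum_le (x : σ → ℝ) {k : ℕ} (hk : 2 ≤ k) :
    |eval x (psum σ ℝ k)| ≤ √(∑ j, x j ^ 2) ^ k := by
  set s := √(∑ j, x j ^ 2)
  have hs2 : s ^ 2 = ∑ j, x j ^ 2 := Real.sq_sqrt (sum_nonneg fun j _ => sq_nonneg _)
  have hx : ∀ j, |x j| ≤ s := fun j => Real.abs_le_sqrt
    (single_le_sum (fun j _ => sq_nonneg (x j)) (mem_univ j))
  have hsplit : ∀ t : ℝ, |t| ^ k = t ^ 2 * |t| ^ (k - 2) := fun t => by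
    rw [← sq_abs t, ← pow_add, Nat.add_sub_cancel' hk]
  calc |eval x (psum σ ℝ k)| = |∑ j, x j ^ k| := by simp [psum]
    _ ≤ ∑ j, |x j| ^ k := by simpa only [abs_pow] using abs_sum_le_sum_abs (fun j => x j ^ k) univ
    _ ≤ ∑ j, x j ^ 2 * s ^ (k - 2) := by
      gcongr with j
      rw [hsplit]
      gcongr
      exact hx j
    _ = s ^ k := by rw [← sum_mul, ← hs2, ← pow_add, Nat.add_sub_cancel' hk]

theorem abs_eval_esymm_le_of_sum_eq_zero (x : σ → ℝ) (hx : ∑ j, x j = 0) (k : ℕ) :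
    |eval x (esymm σ ℝ k)| ≤ √(∑ j, x j ^ 2) ^ k := by
  set s := √(∑ j, x j ^ 2)
  have hpsum : ∀ m, 0 < m → |eval x (psum σ ℝ m)| ≤ s ^ m := by
    rintro (_ | _ | m) hm
    · omega
    · simp only [zero_add, pow_one, psum_one, map_sum, eval_X, hx, abs_zero]
      positivity
    · exact abs_eval_psum_le x (by omega)
  induction k using Nat.strong_induction_on with
  | _ k ih =>
  rcases Nat.eq_zero_or_pos k with rfl | hk
  · simp
  refine le_of_mul_le_mul_left ?_ (Nat.cast_pos.mpr hk)
  calc (k : ℝ) * |eval x (esymm σ ℝ k)| = |eval x (k * esymm σ ℝ k)| := by simp [abs_mul]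
    _ = |∑ a ∈ antidiagonal k with a.1 < k,
          (-1) ^ a.1 * eval x (esymm σ ℝ a.1) * eval x (psum σ ℝ a.2)| := by
      rw [mul_esymm_eq_sum]
      simp [abs_mul]
    _ ≤ ∑ a ∈ antidiagonal k with a.1 < k, s ^ k := by
      refine (abs_sum_le_sum_abs _ _).trans (sum_le_sum fun a ha => ?_)
      rw [mem_filter, HasAntidiagonal.mem_antidiagonal] at ha
      rw [abs_mul, abs_mul, abs_neg_one_pow, one_mul, ← ha.1, pow_add]
      exact mul_le_mul (ih _ ha.2) (hpsum _ (by omega)) (abs_nonneg _) (by positivity)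
    _ = k * s ^ k := by rw [sum_const, card_filter_antidiagonal_fst_lt, nsmul_eq_mul]

theorem eval_esymm_two_of_sum_eq_zero (x : σ → ℝ) (hx : ∑ j, x j = 0) :
    eval x (esymm σ ℝ 2) = -(∑ j, x j ^ 2) / 2 := by
  have h := congrArg (eval x) (two_mul_esymm_two (σ := σ) ℝ)
  simp only [map_mul, map_ofNat, map_sub, map_pow, psum, map_sum, eval_X, pow_one, hx] at h
  linear_combination h / 2

end MvPolynomial

theorem tschirnhausen_coeff_bound_general (n : ℕ) (lam : Fin n → ℝ)
    (P : Polynomial ℝ) (hP : P = ∏ j, (X - C (lam j)))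
    (htsch : P.coeff (n - 1) = 0) :
    ∀ i : ℕ, 2 ≤ i → i ≤ n →
      |P.coeff (n - i)| ^ (1 / (i : ℝ)) ≤
        Real.sqrt 2 * |P.coeff (n - 2)| ^ ((1 : ℝ) / 2) := by
  intro i hi2 hin
  have hcoeff (k : ℕ) (hk : k ≤ n) :
      P.coeff (n - k) = (-1) ^ k * MvPolynomial.eval lam (MvPolynomial.esymm (Fin n) ℝ k) := by
    simpa [hP] using coeff_prod_X_sub_C_card_sub lam (hk.trans_eq (Fintype.card_fin n).symm)
  have hsum : ∑ j, lam j = 0 := by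
    simpa [hcoeff 1 (by omega), MvPolynomial.esymm_one] using htsch
  set S := ∑ j, lam j ^ 2
  have hS : 0 ≤ S := by positivity
  have hcoeff_two : |P.coeff (n - 2)| = S / 2 := by
    rw [hcoeff 2 (by omega), MvPolynomial.eval_esymm_two_of_sum_eq_zero lam hsum, abs_mul,
      abs_div, abs_neg, abs_of_nonneg hS]
    norm_num
  have hcoeff_i : |P.coeff (n - i)| ≤ √S ^ i := by
    simpa [hcoeff i hin, abs_mul] using MvPolynomial.abs_eval_esymm_le_of_sum_eq_zero lam hsum i
  calc |P.coeff (n - i)| ^ (1 / (i : ℝ)) ≤ (√S ^ i) ^ (1 / (i : ℝ)) := by gcongr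
    _ = √S := by rw [one_div, Real.pow_rpow_inv_natCast (Real.sqrt_nonneg _) (by omega)]
    _ = √2 * |P.coeff (n - 2)| ^ ((1 : ℝ) / 2) := by
      rw [hcoeff_two, ← Real.sqrt_eq_rpow, ← Real.sqrt_mul zero_le_two,
        mul_div_cancel₀ _ two_ne_zero]

theorem tschirnhausen_coeff_bound (n : ℕ) (hn : 2 ≤ n) (lam : Fin n → ℝ)
    (P : Polynomial ℝ) (hP : P = ∏ j, (X - C (lam j)))
    (htsch : P.coeff (n - 1) = 0) :
    ∀ i : ℕ, 2 ≤ i → i ≤ n →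
      |P.coeff (n - i)| ^ (1 / (i : ℝ)) ≤
        Real.sqrt 2 * |P.coeff (n - 2)| ^ ((1 : ℝ) / 2) :=
  tschirnhausen_coeff_bound_general n lam P hP htsch
end

section
/- Let P_a = P_b · P_c be a factorization of a monic real polynomial of degree n = k + m into a monic polynomial P_b of degree k ≤ n and a monic polynomial P_c, all with real roots. Let P_ã and P_b̃ denote the Tschirnhausen forms of P_a and P_b respectively (obtained by substituting Z ↦ Z - a1/n, resp. Z ↦ Z - b1/k). Then |b̃2| ≤ 2n·|ã2|, where b̃2 and ã2 are the coefficients of Z^{k-2} and Z^{n-2} in P_b̃ and P_ã. -/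
/-!
After the Tschirnhausen shift the roots of a monic real-rooted polynomial are centred, so by
Newton's identity `2 e₂ = p₁² - p₂` its coefficient of `Z ^ (d - 2)` is `-½ ∑ (rᵢ - r̄)²`.
The roots of `P_b` are among those of `P_a`, and the mean minimises the sum of squared
deviations, so already `|b̃₂| ≤ |ã₂|`.
-/

open Polynomial Finset Fintype
open scoped BigOperators

/-- The degree `n` is passed explicitly, as in the paper's `Z ↦ Z - a₁ / n`. -/
noncomputable def tschirnhausen {K : Type*} [Field K] (n : ℕ) (p : K[X]) : K[X] :=
  p.comp (X - C (p.coeff (n - 1) / n))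

section Roots

variable {ι : Type*} [Fintype ι]

theorem prod_X_sub_C_comp_X_sub_C {R : Type*} [CommRing R] (t : ι → R) (x : R) :
    (∏ i, (X - C (t i))).comp (X - C x) = ∏ i, (X - C (t i + x)) := by
  rw [Polynomial.prod_comp]
  refine prod_congr rfl fun i _ => ?_
  rw [sub_comp, X_comp, C_comp, sub_sub, ← C_add, add_comm x]

theorem two_mul_esymm_two {R : Type*} [CommRing R] (t : ι → R) :
    2 * (univ.val.map t).esymm 2 = (∑ i, t i) ^ 2 - ∑ i, t i ^ 2 := by
  have newton := MvPolynomial.mul_esymm_eq_sum ι R 2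
  rw [show (antidiagonal 2).filter (fun a : ℕ × ℕ => a.1 < 2) = {(0, 2), (1, 1)} by decide,
    sum_pair (by decide), MvPolynomial.esymm_zero, MvPolynomial.esymm_one] at newton
  have h := congrArg (MvPolynomial.aeval t) newton
  simp only [map_mul, map_natCast, map_add, map_sum, map_pow, map_neg, map_one, pow_one,
    MvPolynomial.aeval_esymm_eq_multiset_esymm, MvPolynomial.psum, MvPolynomial.aeval_X] at h
  linear_combination h

theorem two_mul_prod_X_sub_C_coeff_card_sub_two {R : Type*} [CommRing R] (t : ι → R)
    (h : 2 ≤ card ι) :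
    2 * (∏ i, (X - C (t i))).coeff (card ι - 2) = (∑ i, t i) ^ 2 - ∑ i, t i ^ 2 := by
  have hprod : ∏ i, (X - C (t i)) = ((univ.val.map t).map fun r => X - C r).prod := by
    rw [Multiset.map_map]; rfl
  have hcard : Multiset.card (univ.val.map t) = card ι := by simp
  rw [hprod, Multiset.prod_X_sub_C_coeff _ (by omega), hcard,
    Nat.sub_sub_self h, neg_one_sq, one_mul, two_mul_esymm_two]

variable {K : Type*} [Field K] [CharZero K]

theorem tschirnhausen_prod_X_sub_C [Nonempty ι] (t : ι → K) :
    tschirnhausen (card ι) (∏ i, (X - C (t i))) = ∏ i, (X - C (balance t i)) := by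
  have hcoeff := prod_X_sub_C_coeff_card_pred univ t univ_nonempty.card_pos
  rw [card_univ] at hcoeff
  rw [tschirnhausen, hcoeff, prod_X_sub_C_comp_X_sub_C, neg_div, ← Fintype.expect_eq_sum_div_card]
  simp only [← sub_eq_add_neg, balance_apply]

theorem tschirnhausen_prod_X_sub_C_coeff_sub_two {n : ℕ} (t : ι → K) (hn : card ι = n)
    (h2 : 2 ≤ n) :
    (tschirnhausen n (∏ i, (X - C (t i)))).coeff (n - 2) = -(∑ i, balance t i ^ 2) / 2 := by
  subst hn
  have : Nonempty ι := card_pos_iff.mp (by omega)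
  have h := two_mul_prod_X_sub_C_coeff_card_sub_two (balance t) h2
  rw [sum_balance] at h
  rw [tschirnhausen_prod_X_sub_C]
  linear_combination h / 2

end Roots

section Deviations

variable {ι κ K : Type*} [Fintype ι] [Fintype κ] [Field K] [LinearOrder K] [IsStrictOrderedRing K]

theorem sum_balance_sq_le (t : ι → K) (c : K) : ∑ i, balance t i ^ 2 ≤ ∑ i, (t i - c) ^ 2 := by
  set μ := 𝔼 j, t j
  calc ∑ i, balance t i ^ 2
      ≤ ∑ i, balance t i ^ 2 + 2 * (μ - c) * ∑ i, balance t i + card ι * (μ - c) ^ 2 := by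
        rw [sum_balance, mul_zero, add_zero]
        exact le_add_of_nonneg_right (by positivity)
    _ = ∑ i, (t i - c) ^ 2 := by
        rw [mul_sum, ← nsmul_eq_mul, ← card_univ, ← sum_const, ← sum_add_distrib,
          ← sum_add_distrib]
        exact sum_congr rfl fun i _ => by rw [balance_apply]; ring

theorem sum_balance_sq_le_sum_elim (mu : ι → K) (nu : κ → K) :
    ∑ i, balance mu i ^ 2 ≤ ∑ i, balance (Sum.elim mu nu) i ^ 2 := by
  rw [sum_sum_type]
  refine (sum_balance_sq_le mu _).trans (le_add_of_nonneg_right ?_)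
  exact sum_nonneg fun i _ => sq_nonneg _

end Deviations

theorem tschirnhausen_factor_b2 (n k m : ℕ) (hk : 2 ≤ k) (hn : n = k + m)
    (mu : Fin k → ℝ) (nu : Fin m → ℝ)
    (Pb Pc Pa : Polynomial ℝ)
    (hPb : Pb = ∏ j, (X - C (mu j))) (hPc : Pc = ∏ j, (X - C (nu j)))
    (hPa : Pa = Pb * Pc)
    (a2t : ℝ) (ha2t : a2t = (Pa.comp (X - C (Pa.coeff (n - 1) / n))).coeff (n - 2))
    (b2t : ℝ) (hb2t : b2t = (Pb.comp (X - C (Pb.coeff (k - 1) / k))).coeff (k - 2)) :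
    |b2t| ≤ 2 * n * |a2t| := by
  set g : Fin k ⊕ Fin m → ℝ := Sum.elim mu nu
  have hPa' : Pa = ∏ i, (X - C (g i)) := by rw [hPa, hPb, hPc, prod_sum_type]; rfl
  have hcard : card (Fin k ⊕ Fin m) = n := by simp [hn]
  rw [hPa'] at ha2t
  rw [hPb] at hb2t
  have ha : a2t = -(∑ i, balance g i ^ 2) / 2 :=
    ha2t.trans (tschirnhausen_prod_X_sub_C_coeff_sub_two g hcard (by omega))
  have hb : b2t = -(∑ i, balance mu i ^ 2) / 2 :=
    hb2t.trans (tschirnhausen_prod_X_sub_C_coeff_sub_two mu (Fintype.card_fin k) hk)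
  have hba : |b2t| ≤ |a2t| := by
    have hdev := sum_balance_sq_le_sum_elim mu nu
    have hnonneg : 0 ≤ ∑ i, balance mu i ^ 2 := sum_nonneg fun i _ => sq_nonneg _
    rw [ha, hb, abs_div, abs_div, abs_neg, abs_neg, abs_of_nonneg hnonneg,
      abs_of_nonneg (hnonneg.trans hdev)]
    gcongr
  have hn1 : (1 : ℝ) ≤ 2 * n := by norm_cast; omega
  calc |b2t| ≤ |a2t| := hba
    _ ≤ 2 * n * |a2t| := le_mul_of_one_le_left (abs_nonneg _) hn1
end

section
/- Let I ⊆ ℝ be an open interval, f : I → ℝ a C^{1,1} function (f is C^1 with f' Lipschitz) that is nonnegative on I. Let t0 ∈ I and M > 0 be such that the interval I_{t0} := {t : |t - t0| < M^{-1} |f(t0)|^{1/2}} is contained in I and M ≥ (Lip_{I_{t0}}(f'))^{1/2}. Then |f'(t0)| ≤ 2 M |f(t0)|^{1/2}. -/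
/-!
If `f(t₀) = 0`, then `t₀` is an interior minimum of `f` and `f'(t₀) = 0`. Otherwise, on the ball
`I₀` of radius `r = √f(t₀) / M` the Lipschitz bound keeps `f'` within `K r` of `f'(t₀)`, so by the
mean value inequality `f(t₀ ± s) ≤ f(t₀) ± f'(t₀) s + K r s`. Nonnegativity of `f(t₀ ∓ s)` gives
`|f'(t₀)| s ≤ f(t₀) + K r s` for `s < r`, hence for `s = r`, and `K r² ≤ M² r² = f(t₀)` turns this into
`|f'(t₀)| r ≤ 2 f(t₀)`.
-/

open Set Metric

theorem norm_sub_sub_smul_le_of_lipschitzOnWith_ball {𝕜 E : Type*} [RCLike 𝕜]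
    [NormedAddCommGroup E] [NormedSpace 𝕜 E] {f f' : 𝕜 → E} {x₀ x : 𝕜} {r : ℝ} {K : NNReal}
    (hf : ∀ y ∈ ball x₀ r, HasDerivAt f (f' y) y) (hf' : LipschitzOnWith K f' (ball x₀ r))
    (hx : x ∈ ball x₀ r) :
    ‖f x - f x₀ - (x - x₀) • f' x₀‖ ≤ K * r * ‖x - x₀‖ := by
  have hx₀ : x₀ ∈ ball x₀ r := mem_ball_self (pos_of_mem_ball hx)
  set g : 𝕜 → E := fun y ↦ f y - (y - x₀) • f' x₀
  have hg : ∀ y ∈ ball x₀ r, HasDerivWithinAt g (f' y - f' x₀) (ball x₀ r) y := fun y hy ↦ by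
    have := (hf y hy).sub (((hasDerivAt_id y).sub_const x₀).smul_const (f' x₀))
    rw [one_smul] at this
    exact this.hasDerivWithinAt
  have hg' : ∀ y ∈ ball x₀ r, ‖f' y - f' x₀‖ ≤ K * r := fun y hy ↦ by
    rw [← dist_eq_norm]
    exact (hf'.dist_le_mul y hy x₀ hx₀).trans (by gcongr; exact (mem_ball.1 hy).le)
  rw [sub_right_comm]
  simpa [g] using (convex_ball x₀ r).norm_image_sub_le_of_norm_hasDerivWithin_le hg hg' hx₀ hx

theorem abs_mul_le_of_nonneg_of_abs_sub_sub_le {f : ℝ → ℝ} {x₀ r c B : ℝ} (hr : 0 < r)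
    (hf : ∀ x ∈ ball x₀ r, 0 ≤ f x)
    (hc : ∀ x ∈ ball x₀ r, |f x - f x₀ - (x - x₀) * c| ≤ B * |x - x₀|) :
    |c| * r ≤ f x₀ + B * r := by
  have hmem : ∀ s ∈ Ioo 0 r, x₀ + s ∈ ball x₀ r ∧ x₀ - s ∈ ball x₀ r := fun s hs ↦ by
    simp [abs_of_pos hs.1, hs.2]
  have hs : ∀ s ∈ Ioo 0 r, |c| * s ≤ f x₀ + B * s := fun s hs ↦ by
    obtain ⟨hplus, hminus⟩ := hmem s hs
    have h₁ := abs_le.1 (hc _ hplus)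
    have h₂ := abs_le.1 (hc _ hminus)
    have := hf _ hplus
    have := hf _ hminus
    simp only [add_sub_cancel_left, sub_sub_cancel_left, abs_neg, abs_of_pos hs.1] at h₁ h₂
    rcases abs_cases c with ⟨hc, -⟩ | ⟨hc, -⟩ <;> rw [hc] <;> nlinarith
  have hclosed : IsClosed {s : ℝ | |c| * s ≤ f x₀ + B * s} :=
    isClosed_le (by fun_prop) (by fun_prop)
  have hr_mem : r ∈ closure (Ioo 0 r) := by
    rw [closure_Ioo hr.ne]
    exact right_mem_Icc.2 hr.le
  exact hclosed.closure_subset_iff.2 hs hr_mem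

theorem glaeser_type (a b : ℝ) (f f' : ℝ → ℝ)
    (hderiv : ∀ t ∈ Ioo a b, HasDerivAt f (f' t) t)
    (hnonneg : ∀ t ∈ Ioo a b, 0 ≤ f t)
    (t0 : ℝ) (ht0 : t0 ∈ Ioo a b) (M : ℝ) (hM : 0 < M)
    (I0 : Set ℝ)
    (hI0 : I0 = {t : ℝ | |t - t0| < M⁻¹ * Real.sqrt (f t0)})
    (hsub : I0 ⊆ Ioo a b)
    (K : NNReal) (hlip : LipschitzOnWith K f' I0) (hMK : Real.sqrt K ≤ M) :
    |f' t0| ≤ 2 * M * Real.sqrt (f t0) := by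
  rcases (hnonneg t0 ht0).eq_or_lt with hzero | hpos
  · have hmin : IsLocalMin f t0 := by
      filter_upwards [isOpen_Ioo.mem_nhds ht0] with t ht
      exact hzero ▸ hnonneg t ht
    simp [hmin.hasDerivAt_eq_zero (hderiv t0 ht0), ← hzero]
  set r := M⁻¹ * Real.sqrt (f t0)
  have hr : 0 < r := by positivity
  have hball : I0 = ball t0 r := by ext t; simp [hI0, Real.dist_eq]
  subst hball
  have hbound := abs_mul_le_of_nonneg_of_abs_sub_sub_le hr (fun t ht ↦ hnonneg t (hsub ht))
    fun t ht ↦ norm_sub_sub_smul_le_of_lipschitzOnWith_ball (fun y hy ↦ hderiv y (hsub hy)) hlip ht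
  have hrM : r * M = Real.sqrt (f t0) := by simp only [r]; field_simp
  have hKr : K * r * r ≤ f t0 := calc
    K * r * r ≤ M ^ 2 * r * r := by gcongr; exact (Real.sqrt_le_left hM.le).1 hMK
    _ = Real.sqrt (f t0) ^ 2 := by rw [← hrM]; ring
    _ = f t0 := Real.sq_sqrt hpos.le
  refine le_of_mul_le_mul_right ?_ (Real.sqrt_pos.2 hpos)
  calc |f' t0| * Real.sqrt (f t0) = |f' t0| * r * M := by rw [← hrM]; ring
    _ ≤ 2 * f t0 * M := mul_le_mul_of_nonneg_right (by linarith) hM.le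
    _ = 2 * M * Real.sqrt (f t0) * Real.sqrt (f t0) := by
      rw [mul_assoc _ (Real.sqrt _), Real.mul_self_sqrt hpos.le]; ring
end

section
/- Let I ⊆ ℝ be an open interval, f : I → ℝ a C^1 function with Lipschitz derivative, and suppose f ≥ 0 on I. Then for every t0 ∈ I such that the interval of radius L^{-1/2} f(t0)^{1/2} around t0 is contained in I, where L = Lip_I(f') > 0, one has f'(t0)^2 ≤ 4 L f(t0). -/
/-!
Where `f t0 = 0`, the point `t0` is an interior minimum of `f`, so `f' t0 = 0`. Otherwise the
Lipschitz bound on `f'` gives `0 ≤ f (t0 + h) ≤ f t0 + f' t0 * h + L * h ^ 2` for `|h| < r`, where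
`r = L ^ (-1/2) * √(f t0)` satisfies `L * r ^ 2 = f t0`. By continuity this persists at `h = ±r`,
and multiplying the two resulting bounds `0 ≤ 2 f t0 ± f' t0 * r` gives
`(f' t0 * r) ^ 2 ≤ 4 (f t0) ^ 2 = 4 L r ^ 2 f t0`.
-/

open Set
open scoped NNReal

theorem Convex.norm_image_sub_sub_smul_le_of_lipschitzOnWith {𝕜 G : Type*} [RCLike 𝕜]
    [NormedAddCommGroup G] [NormedSpace 𝕜 G] {f f' : 𝕜 → G} {s : Set 𝕜} {x y : 𝕜} {L : ℝ≥0}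
    (hs : Convex ℝ s) (hf : ∀ z ∈ s, HasDerivWithinAt f (f' z) s z)
    (hlip : LipschitzOnWith L f' s) (xs : x ∈ s) (ys : y ∈ s) :
    ‖f y - f x - (y - x) • f' x‖ ≤ L * ‖y - x‖ ^ 2 := by
  have hxy : segment ℝ x y ⊆ s := hs.segment_subset xs ys
  have hderiv : ∀ z ∈ segment ℝ x y, HasDerivWithinAt (fun z => f z - z • f' x)
      (f' z - f' x) (segment ℝ x y) z := fun z hz => by
    simpa using ((hf z (hxy hz)).mono hxy).fun_sub ((hasDerivWithinAt_id z _).smul_const (f' x))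
  have hbound : ∀ z ∈ segment ℝ x y, ‖f' z - f' x‖ ≤ L * ‖y - x‖ := fun z hz =>
    (hlip.norm_sub_le (hxy hz) xs).trans <| by gcongr; exact norm_sub_le_of_mem_segment hz
  have hmvt := (convex_segment x y).norm_image_sub_le_of_norm_hasDerivWithin_le hderiv hbound
    (left_mem_segment ℝ x y) (right_mem_segment ℝ x y)
  calc ‖f y - f x - (y - x) • f' x‖ = ‖f y - y • f' x - (f x - x • f' x)‖ := by
        rw [sub_smul]; congr 1; abel
    _ ≤ L * ‖y - x‖ ^ 2 := by rw [sq, ← mul_assoc]; exact hmvt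

theorem sq_le_four_mul_of_forall_abs_lt {b c L r : ℝ} (hr : 0 < r) (hc : L * r ^ 2 = c)
    (hq : ∀ x, |x| < r → 0 ≤ c + b * x + L * x ^ 2) : b ^ 2 ≤ 4 * L * c := by
  have hq' : ∀ x, |x| ≤ r → 0 ≤ c + b * x + L * x ^ 2 := by
    have hclosed : IsClosed {x : ℝ | 0 ≤ c + b * x + L * x ^ 2} :=
      isClosed_le continuous_const (by fun_prop)
    have hball : Metric.ball (0 : ℝ) r ⊆ {x | 0 ≤ c + b * x + L * x ^ 2} := fun x hx =>
      hq x (by simpa using hx)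
    rw [← hclosed.closure_subset_iff, closure_ball (0 : ℝ) hr.ne'] at hball
    exact fun x hx => hball (by simpa using hx)
  have hpos := hq' r (abs_of_pos hr).le
  have hneg := hq' (-r) (by rw [abs_neg, abs_of_pos hr])
  subst hc
  have hmul : b ^ 2 * r ^ 2 ≤ 4 * L * (L * r ^ 2) * r ^ 2 := by nlinarith [mul_nonneg hpos hneg]
  exact le_of_mul_le_mul_right hmul (by positivity)

theorem mul_sq_rpow_neg_half_mul_sqrt {L c : ℝ} (hL : 0 < L) (hc : 0 ≤ c) :
    L * (L ^ (-(1 : ℝ) / 2) * Real.sqrt c) ^ 2 = c := by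
  rw [neg_div, Real.rpow_neg hL.le, ← Real.sqrt_eq_rpow, mul_pow, inv_pow,
    Real.sq_sqrt hL.le, Real.sq_sqrt hc]
  field_simp

theorem glaeser_inequality (a b : ℝ) (f f' : ℝ → ℝ)
    (hderiv : ∀ t ∈ Ioo a b, HasDerivAt f (f' t) t)
    (hnonneg : ∀ t ∈ Ioo a b, 0 ≤ f t)
    (L : NNReal) (hL : 0 < L) (hlip : LipschitzOnWith L f' (Ioo a b)) :
    ∀ t0 ∈ Ioo a b,
      {t : ℝ | |t - t0| < (L : ℝ) ^ (-(1 : ℝ) / 2) * Real.sqrt (f t0)} ⊆ Ioo a b →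
      (f' t0) ^ 2 ≤ 4 * L * f t0 := by
  intro t0 ht0 hball
  obtain hf0 | hf0 := (hnonneg t0 ht0).eq_or_lt
  · have hmin : IsLocalMin f t0 :=
      Filter.mem_of_superset (isOpen_Ioo.mem_nhds ht0) fun t ht => hf0 ▸ hnonneg t ht
    simp [hmin.hasDerivAt_eq_zero (hderiv t0 ht0), ← hf0]
  refine sq_le_four_mul_of_forall_abs_lt (by positivity)
    (mul_sq_rpow_neg_half_mul_sqrt hL hf0.le) fun h hh => ?_
  have ht : t0 + h ∈ Ioo a b := hball (by simpa using hh)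
  have htaylor := (convex_Ioo a b).norm_image_sub_sub_smul_le_of_lipschitzOnWith
    (fun t ht => (hderiv t ht).hasDerivWithinAt) hlip ht0 ht
  rw [add_sub_cancel_left, Real.norm_eq_abs, Real.norm_eq_abs, sq_abs, smul_eq_mul] at htaylor
  linarith [(abs_le.mp htaylor).2, hnonneg _ ht]
end

section
/- There exists a constant C(m) depending only on m such that: for every open bounded interval I ⊆ ℝ and every f ∈ C^{m-1,1}(closure of I) (f is C^{m-1} and f^{(m-1)} is Lipschitz), and for all t ∈ I and all k = 1,…,m-1, one has |f^{(k)}(t)| ≤ C(m) |I|^{-k} ( ‖f‖_{L^∞(I)} + Lip_I(f^{(m-1)}) |I|^m ), where |I| denotes the length of I. -/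
/-! Let `P` be the Taylor polynomial of degree `m - 1` of `f` at `t`. Integrating the Lipschitz
bound on `f⁽ᵐ⁻¹⁾ - P⁽ᵐ⁻¹⁾` `m - 1` times gives `|f - P| ≤ K |I|ᵐ` on `I`, so
`|P| ≤ ‖f‖_∞ + K |I|ᵐ` there. On polynomials of degree `< m` all norms are equivalent: Lagrange
interpolation bounds the coefficients, hence every derivative on `[0, 1]`, by the sup norm on
`[0, 1]`, and the affine change of variables from `[0, 1]` to `I` produces the factor `|I|⁻ᵏ`.
Since `f⁽ᵏ⁾(t) = P⁽ᵏ⁾(t)`, this is the estimate. -/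

open Set Polynomial

namespace Polynomial

theorem exists_abs_coeff_le_of_abs_eval_le (m : ℕ) :
    ∃ C > 0, ∀ q : ℝ[X], q.natDegree < m → ∀ M : ℝ,
      (∀ x ∈ Icc (0 : ℝ) 1, |q.eval x| ≤ M) → ∀ j, |q.coeff j| ≤ C * M := by
  set s := Finset.range m
  set v : ℕ → ℝ := fun i => i / m
  have hv : Set.InjOn v s := fun i hi j _ h => by
    have : (m : ℝ) ≠ 0 := Nat.cast_ne_zero.mpr (Finset.nonempty_range_iff.mp ⟨i, hi⟩)
    exact_mod_cast (div_left_inj' this).mp h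
  have hvI : ∀ i ∈ s, v i ∈ Icc (0 : ℝ) 1 := fun i hi =>
    ⟨by positivity,
      div_le_one_of_le₀ (by exact_mod_cast (Finset.mem_range.mp hi).le) (by positivity)⟩
  set B := ∑ i ∈ s, ∑ j ∈ s, |(Lagrange.basis s v i).coeff j|
  refine ⟨B + 1, by positivity, fun q hq M hM j => ?_⟩
  have hM0 : 0 ≤ M := (abs_nonneg _).trans (hM 0 ⟨le_rfl, zero_le_one⟩)
  rcases lt_or_ge j m with hj | hj
  · -- `q` is the interpolant of its values at the nodes `i / m`
    have hco : q.coeff j = ∑ i ∈ s, q.eval (v i) * (Lagrange.basis s v i).coeff j := by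
      have hdeg : q.degree < s.card := by
        rw [Finset.card_range]; exact (degree_le_natDegree).trans_lt (by exact_mod_cast hq)
      conv_lhs => rw [Lagrange.eq_interpolate hv hdeg, Lagrange.interpolate_apply, finsetSum_coeff]
      simp only [coeff_C_mul]
    calc |q.coeff j| ≤ ∑ i ∈ s, M * |(Lagrange.basis s v i).coeff j| := by
          rw [hco]
          refine (Finset.abs_sum_le_sum_abs _ _).trans (Finset.sum_le_sum fun i hi => ?_)
          rw [abs_mul]
          gcongr
          exact hM _ (hvI i hi)
      _ ≤ M * B := by
          rw [← Finset.mul_sum]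
          refine mul_le_mul_of_nonneg_left (Finset.sum_le_sum fun i _ => ?_) hM0
          exact Finset.single_le_sum (f := fun j => |(Lagrange.basis s v i).coeff j|)
            (fun _ _ => abs_nonneg _) (Finset.mem_range.mpr hj)
      _ ≤ (B + 1) * M := by nlinarith
  · rw [coeff_eq_zero_of_natDegree_lt (hq.trans_le hj), abs_zero]
    positivity

theorem abs_eval_le_sum_abs_coeff {p : ℝ[X]} {m : ℕ} (hp : p.natDegree < m) {x : ℝ}
    (hx : |x| ≤ 1) : |p.eval x| ≤ ∑ i ∈ Finset.range m, |p.coeff i| := by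
  rw [eval_eq_sum_range' hp]
  refine (Finset.abs_sum_le_sum_abs _ _).trans (Finset.sum_le_sum fun i _ => ?_)
  rw [abs_mul, abs_pow]
  exact mul_le_of_le_one_right (abs_nonneg _) (pow_le_one₀ (abs_nonneg _) hx)

theorem abs_coeff_iterate_derivative_le {p : ℝ[X]} {m : ℕ} (hp : p.natDegree < m) {B : ℝ}
    (hB : ∀ j, |p.coeff j| ≤ B) (k i : ℕ) : |(derivative^[k] p).coeff i| ≤ m ^ m * B := by
  rw [coeff_iterate_derivative, nsmul_eq_mul, abs_mul, Nat.abs_cast]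
  rcases lt_or_ge (i + k) m with h | h
  · have : (i + k).descFactorial k ≤ m ^ m :=
      (Nat.descFactorial_le_pow _ _).trans
        ((Nat.pow_le_pow_left h.le k).trans (Nat.pow_le_pow_right (by omega) (by omega)))
    exact mul_le_mul (by exact_mod_cast this) (hB _) (abs_nonneg _) (by positivity)
  · rw [coeff_eq_zero_of_natDegree_lt (hp.trans_le h), abs_zero, mul_zero]
    exact mul_nonneg (by positivity) ((abs_nonneg _).trans (hB 0))

theorem exists_abs_iterate_derivative_eval_le (m : ℕ) (hm : 0 < m) :
    ∃ C > 0, ∀ q : ℝ[X], q.natDegree < m → ∀ M : ℝ, (∀ x ∈ Icc (0 : ℝ) 1, |q.eval x| ≤ M) →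
      ∀ k, ∀ x ∈ Icc (0 : ℝ) 1, |(derivative^[k] q).eval x| ≤ C * M := by
  obtain ⟨c, hc, hcoeff⟩ := exists_abs_coeff_le_of_abs_eval_le m
  refine ⟨m * m ^ m * c, by positivity, fun q hq M hM k x hx => ?_⟩
  have hdeg : (derivative^[k] q).natDegree < m :=
    (natDegree_iterate_derivative q k).trans_lt ((Nat.sub_le _ _).trans_lt hq)
  calc |(derivative^[k] q).eval x|
      ≤ ∑ i ∈ Finset.range m, |(derivative^[k] q).coeff i| :=
        abs_eval_le_sum_abs_coeff hdeg (abs_le.mpr ⟨by linarith [hx.1], hx.2⟩)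
    _ ≤ ∑ i ∈ Finset.range m, (m : ℝ) ^ m * (c * M) :=
        Finset.sum_le_sum fun i _ => abs_coeff_iterate_derivative_le hq (hcoeff q hq M hM) k i
    _ = m * m ^ m * c * M := by rw [Finset.sum_const, Finset.card_range, nsmul_eq_mul]; ring

theorem iterate_derivative_comp_linear {R : Type*} [CommSemiring R] (p : R[X]) (a b : R)
    (k : ℕ) : derivative^[k] (p.comp (C a * X + C b)) =
      C (a ^ k) * (derivative^[k] p).comp (C a * X + C b) := by
  induction k with
  | zero => simp
  | succ k ih =>
    rw [Function.iterate_succ_apply', ih, derivative_C_mul, derivative_comp,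
      Function.iterate_succ_apply', derivative_add, derivative_C_mul_X, derivative_C, add_zero,
      pow_succ, C_mul]
    ring

theorem exists_pow_mul_abs_iterate_derivative_eval_le (m : ℕ) (hm : 0 < m) :
    ∃ C > 0, ∀ a b : ℝ, a < b → ∀ q : ℝ[X], q.natDegree < m → ∀ M : ℝ,
      (∀ x ∈ Icc a b, |q.eval x| ≤ M) →
      ∀ k, ∀ x ∈ Icc a b, (b - a) ^ k * |(derivative^[k] q).eval x| ≤ C * M := by
  obtain ⟨c, hc, hbound⟩ := exists_abs_iterate_derivative_eval_le m hm
  refine ⟨c, hc, fun a b hab q hq M hM k x hx => ?_⟩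
  have hL : 0 < b - a := sub_pos.mpr hab
  set r := q.comp (C (b - a) * X + C a)
  have hr : ∀ y, r.eval y = q.eval ((b - a) * y + a) := fun y => by simp [r]
  have hrdeg : r.natDegree < m :=
    natDegree_comp_le.trans_lt (by nlinarith [natDegree_linear_le (a := b - a) (b := a)])
  have hrM : ∀ y ∈ Icc (0 : ℝ) 1, |r.eval y| ≤ M := fun y hy => by
    rw [hr]; exact hM _ ⟨by nlinarith [hy.1], by nlinarith [hy.2]⟩
  have hy : (x - a) / (b - a) ∈ Icc (0 : ℝ) 1 :=
    ⟨div_nonneg (by linarith [hx.1]) hL.le, (div_le_one hL).mpr (by linarith [hx.2])⟩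
  have := hbound r hrdeg M hrM k _ hy
  rwa [iterate_derivative_comp_linear, eval_mul, eval_C, eval_comp, eval_add, eval_mul, eval_C,
    eval_X, eval_C, mul_div_cancel₀ _ hL.ne', sub_add_cancel, abs_mul,
    abs_of_pos (pow_pos hL k)] at this

variable {R : Type*} [Field R]

noncomputable def taylorPoly (d : ℕ → R) (t : R) (n : ℕ) : R[X] :=
  ∑ j ∈ Finset.range (n + 1), C (d j / j.factorial) * (X - C t) ^ j

theorem natDegree_taylorPoly_le (d : ℕ → R) (t : R) (n : ℕ) :
    (taylorPoly d t n).natDegree ≤ n := by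
  refine natDegree_sum_le_of_forall_le _ _ fun j hj => (natDegree_C_mul_le _ _).trans ?_
  rw [natDegree_pow, natDegree_X_sub_C, mul_one]
  exact Nat.lt_succ_iff.mp (Finset.mem_range.mp hj)

theorem iterate_derivative_taylorPoly (d : ℕ → R) (t : R) (n k : ℕ) :
    derivative^[k] (taylorPoly d t n) =
      ∑ j ∈ Finset.range (n + 1),
        C (d j / j.factorial * j.descFactorial k) * (X - C t) ^ (j - k) := by
  simp only [taylorPoly, iterate_derivative_sum, iterate_derivative_C_mul,
    iterate_derivative_X_sub_pow, nsmul_eq_mul, C_mul, C_eq_natCast, mul_assoc]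

theorem iterate_derivative_taylorPoly_eval_self [CharZero R] (d : ℕ → R) (t : R) {n k : ℕ}
    (hk : k ≤ n) :
    (derivative^[k] (taylorPoly d t n)).eval t = d k := by
  rw [iterate_derivative_taylorPoly, eval_finsetSum, Finset.sum_eq_single_of_mem k
    (Finset.mem_range.mpr (Nat.lt_succ_of_le hk))]
  · simp [Nat.descFactorial_self, Nat.factorial_ne_zero]
  · intro j _ hjk
    rcases lt_or_gt_of_ne hjk with h | h
    · simp [Nat.descFactorial_eq_zero_iff_lt.mpr h]
    · simp [zero_pow (Nat.sub_ne_zero_of_lt h)]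

theorem iterate_derivative_taylorPoly_self [CharZero R] (d : ℕ → R) (t : R) (n : ℕ) :
    derivative^[n] (taylorPoly d t n) = C (d n) := by
  rw [iterate_derivative_taylorPoly, Finset.sum_eq_single_of_mem n (Finset.self_mem_range_succ n)]
  · simp [Nat.descFactorial_self, Nat.factorial_ne_zero]
  · intro j hj hjn
    have : j < n := by have := Finset.mem_range.mp hj; omega
    simp [Nat.descFactorial_eq_zero_iff_lt.mpr this]

end Polynomial

theorem ContDiffOn.hasDerivWithinAt_iteratedDerivWithin {𝕜 F : Type*}
    [NontriviallyNormedField 𝕜] [NormedAddCommGroup F] [NormedSpace 𝕜 F] {f : 𝕜 → F} {s : Set 𝕜}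
    {n j : ℕ}
    (hf : ContDiffOn 𝕜 n f s) (hs : UniqueDiffOn 𝕜 s) (hj : j < n) {x : 𝕜} (hx : x ∈ s) :
    HasDerivWithinAt (iteratedDerivWithin j f s) (iteratedDerivWithin (j + 1) f s x) s x := by
  rw [iteratedDerivWithin_succ]
  exact ((hf.differentiableOn_iteratedDerivWithin (by exact_mod_cast hj) hs) x hx).hasDerivWithinAt

theorem abs_le_mul_of_hasDerivWithinAt_of_eq_zero {g g' : ℝ → ℝ} {a b t B : ℝ}
    (hg : ∀ x ∈ Icc a b, HasDerivWithinAt g (g' x) (Icc a b) x)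
    (hB : ∀ x ∈ Icc a b, |g' x| ≤ B) (ht : t ∈ Icc a b) (hgt : g t = 0) {s : ℝ}
    (hs : s ∈ Icc a b) : |g s| ≤ B * (b - a) := by
  have h := (convex_Icc a b).norm_image_sub_le_of_norm_hasDerivWithin_le hg hB ht hs
  rw [← dist_eq_norm, ← dist_eq_norm, hgt, dist_zero_right, Real.norm_eq_abs] at h
  exact h.trans (mul_le_mul_of_nonneg_left (Real.dist_le_of_mem_Icc hs ht)
    ((abs_nonneg _).trans (hB t ht)))

theorem abs_sub_taylorPoly_eval_le {f : ℝ → ℝ} {a b t : ℝ} {n : ℕ} {K : NNReal} (hab : a < b)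
    (hf : ContDiffOn ℝ n f (Icc a b))
    (hK : LipschitzOnWith K (iteratedDerivWithin n f (Icc a b)) (Icc a b)) (ht : t ∈ Icc a b)
    {s : ℝ} (hs : s ∈ Icc a b) :
    |f s - (taylorPoly (fun j => iteratedDerivWithin j f (Icc a b) t) t n).eval s|
      ≤ K * (b - a) ^ (n + 1) := by
  set P := taylorPoly (fun j => iteratedDerivWithin j f (Icc a b) t) t n
  suffices ∀ i ≤ n, ∀ s ∈ Icc a b, |iteratedDerivWithin (n - i) f (Icc a b) s -
      (derivative^[n - i] P).eval s| ≤ K * (b - a) ^ (i + 1) by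
    simpa using this n le_rfl s hs
  intro i
  induction i with
  | zero =>
    intro _ s hs
    rw [Nat.sub_zero, iterate_derivative_taylorPoly_self, eval_C, pow_one, ← Real.dist_eq]
    exact (hK.dist_le_mul s hs t ht).trans
      (mul_le_mul_of_nonneg_left (Real.dist_le_of_mem_Icc hs ht) K.coe_nonneg)
  | succ i ih =>
    intro hi s hs
    obtain ⟨j, hj⟩ : ∃ j, n - i = j + 1 := ⟨n - (i + 1), by omega⟩
    have hder : ∀ x ∈ Icc a b, HasDerivWithinAt
        (fun y => iteratedDerivWithin j f (Icc a b) y - (derivative^[j] P).eval y)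
        (iteratedDerivWithin (j + 1) f (Icc a b) x - (derivative^[j + 1] P).eval x)
        (Icc a b) x := fun x hx => by
      refine (hf.hasDerivWithinAt_iteratedDerivWithin (uniqueDiffOn_Icc hab) (by omega) hx).sub ?_
      rw [Function.iterate_succ_apply']
      exact (derivative^[j] P).hasDerivWithinAt x _
    have hzero : iteratedDerivWithin j f (Icc a b) t - (derivative^[j] P).eval t = 0 := by
      rw [iterate_derivative_taylorPoly_eval_self _ _ (by omega), sub_self]
    rw [show n - (i + 1) = j by omega, pow_succ, ← mul_assoc]
    exact abs_le_mul_of_hasDerivWithinAt_of_eq_zero hder (fun x hx => hj ▸ ih (by omega) x hx)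
      ht hzero hs

theorem landau_kolmogorov_type (m : ℕ) (hm : 1 ≤ m) :
    ∃ C : ℝ, 0 < C ∧ ∀ a b : ℝ, a < b → ∀ f : ℝ → ℝ,
      ContDiffOn ℝ (m - 1) f (Icc a b) →
      ∀ K : NNReal,
        LipschitzOnWith K (iteratedDerivWithin (m - 1) f (Icc a b)) (Icc a b) →
      ∀ A : ℝ, (∀ s ∈ Icc a b, |f s| ≤ A) →
      ∀ t ∈ Ioo a b, ∀ k : ℕ, 1 ≤ k → k ≤ m - 1 →
        |iteratedDerivWithin k f (Icc a b) t| ≤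
          C * (b - a) ^ (-(k : ℤ)) * (A + K * (b - a) ^ m) := by
  obtain ⟨n, rfl⟩ : ∃ n, m = n + 1 := ⟨m - 1, by omega⟩
  obtain ⟨C, hC, hmarkov⟩ := exists_pow_mul_abs_iterate_derivative_eval_le (n + 1) n.succ_pos
  refine ⟨C, hC, fun a b hab f hf K hK A hA t ht k _ hk => ?_⟩
  rw [show ((n + 1 : ℕ) : WithTop ℕ∞) - 1 = n by norm_cast] at hf
  rw [Nat.add_sub_cancel] at hK hk
  have htI : t ∈ Icc a b := Ioo_subset_Icc_self ht
  set P := taylorPoly (fun j => iteratedDerivWithin j f (Icc a b) t) t n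
  have hP : ∀ s ∈ Icc a b, |P.eval s| ≤ A + K * (b - a) ^ (n + 1) := fun s hs => by
    have := abs_sub_taylorPoly_eval_le hab hf hK htI hs
    linarith [abs_sub_abs_le_abs_sub (P.eval s) (f s), abs_sub_comm (P.eval s) (f s), hA s hs]
  have h := hmarkov a b hab P ((natDegree_taylorPoly_le _ _ _).trans_lt n.lt_succ_self) _ hP
    k t htI
  rw [iterate_derivative_taylorPoly_eval_self _ _ hk] at h
  rw [zpow_neg, zpow_natCast, mul_right_comm, ← div_eq_mul_inv,
    le_div_iff₀ (pow_pos (sub_pos.mpr hab) k), mul_comm]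
  exact h
end

section
/- Let I ⊆ ℝ be an open interval containing 0, let p ≤ m be natural numbers, and let f : I → ℂ be continuous. Suppose f ∈ C^{m-p}(I), f restricted to I ∖ {0} is C^m, and for all 0 ≤ k ≤ p the limit lim_{t→0} t^k f^{(m-p+k)}(t) exists and is finite. Then t ↦ t^p f(t) is of class C^m on I. -/
/-!
Write `g t = t ^ p • f t`. It is continuous on `I` and `C^m` on `I \ {0}`. A function that is
`C^n` on `I`, `C^(n+1)` on `I \ {0}` and whose `(n+1)`-st derivative has a limit at `0` is
`C^(n+1)` on `I` (a one-sided mean value argument on each side of `0`), so it suffices that every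
`g^(n)` with `n ≤ m` has a limit at `0`. By Leibniz, `g^(n)` is a combination of the terms
`t^(p-i) f^(n-i)(t)`. Such a term converges either because `n - i ≤ m - p`, so that `f^(n-i)` is
continuous on `I`, or because it equals `t^(p-i-k) • t^k f^(m-p+k)(t)` with `k = n - i - (m - p)`.
-/

open Set Filter Topology

theorem Filter.exists_tendsto_finset_sum {α ι M : Type*} [AddCommMonoid M] [TopologicalSpace M]
    [ContinuousAdd M] {l : Filter α} (s : Finset ι) {φ : ι → α → M}
    (h : ∀ i ∈ s, ∃ L, Tendsto (φ i) l (𝓝 L)) :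
    ∃ L, Tendsto (fun a => ∑ i ∈ s, φ i a) l (𝓝 L) :=
  ⟨∑ i ∈ s, limUnder l (φ i), tendsto_finsetSum s fun i hi => tendsto_nhds_limUnder (h i hi)⟩

variable {E : Type*} [NormedAddCommGroup E] [NormedSpace ℝ E]

theorem hasDerivAt_of_tendsto_deriv_nhdsNE {g : ℝ → E} {s : Set ℝ} {x : ℝ} {L : E}
    (hs : s ∈ 𝓝 x) (hgx : ContinuousAt g x) (hg : DifferentiableOn ℝ g (s \ {x}))
    (hlim : Tendsto (deriv g) (𝓝[≠] x) (𝓝 L)) : HasDerivAt g L x := by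
  have hright : HasDerivWithinAt g L (Ici x) x :=
    hasDerivWithinAt_Ici_of_tendsto_deriv (hg.mono fun y hy => ⟨hy.2, ne_of_gt hy.1⟩)
      hgx.continuousWithinAt (inter_mem_nhdsWithin _ hs)
      (hlim.mono_left (nhdsWithin_mono _ fun y hy => ne_of_gt hy))
  have hleft : HasDerivWithinAt g L (Iic x) x :=
    hasDerivWithinAt_Iic_of_tendsto_deriv (hg.mono fun y hy => ⟨hy.2, ne_of_lt hy.1⟩)
      hgx.continuousWithinAt (inter_mem_nhdsWithin _ hs)
      (hlim.mono_left (nhdsWithin_mono _ fun y hy => ne_of_lt hy))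
  simpa using hleft.union hright

theorem contDiffOn_one_of_tendsto_deriv {g : ℝ → E} {s : Set ℝ} {x : ℝ} {L : E}
    (hs : IsOpen s) (hx : x ∈ s) (hg : ContinuousOn g s) (hg' : ContDiffOn ℝ 1 g (s \ {x}))
    (hlim : Tendsto (deriv g) (𝓝[≠] x) (𝓝 L)) : ContDiffOn ℝ 1 g s := by
  have hs' : IsOpen (s \ {x}) := hs.sdiff isClosed_singleton
  have hderiv : HasDerivAt g L x := hasDerivAt_of_tendsto_deriv_nhdsNE (hs.mem_nhds hx)
    (hg.continuousAt (hs.mem_nhds hx)) (hg'.differentiableOn one_ne_zero) hlim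
  have hcont : ContinuousOn (deriv g) (s \ {x}) := hg'.continuousOn_deriv_of_isOpen hs' le_rfl
  rw [show (1 : WithTop ℕ∞) = 0 + 1 from rfl, contDiffOn_succ_iff_deriv_of_isOpen hs,
    contDiffOn_zero]
  refine ⟨fun y hy => ?_, by simp, (hs.continuousOn_iff).2 fun y hy => ?_⟩
  · rcases eq_or_ne y x with rfl | hyx
    · exact hderiv.differentiableAt.differentiableWithinAt
    · exact ((hg'.differentiableOn one_ne_zero y ⟨hy, hyx⟩).differentiableAt
        (hs'.mem_nhds ⟨hy, hyx⟩)).differentiableWithinAt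
  · rcases eq_or_ne y x with rfl | hyx
    · rw [← continuousWithinAt_compl_self, ContinuousWithinAt, hderiv.deriv]
      exact hlim
    · exact hcont.continuousAt (hs'.mem_nhds ⟨hy, hyx⟩)

theorem contDiffOn_of_tendsto_iteratedDeriv {s : Set ℝ} {x : ℝ} (hs : IsOpen s) (hx : x ∈ s)
    {m : ℕ} {g : ℝ → E} (hg : ContinuousOn g s) (hg' : ContDiffOn ℝ m g (s \ {x}))
    (hlim : ∀ n ≤ m, ∃ L, Tendsto (iteratedDeriv n g) (𝓝[≠] x) (𝓝 L)) :
    ContDiffOn ℝ m g s := by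
  induction m generalizing g with
  | zero => exact contDiffOn_zero.2 hg
  | succ m ih =>
    obtain ⟨L, hL⟩ := hlim 1 (by omega)
    have hC1 : ContDiffOn ℝ 1 g s := contDiffOn_one_of_tendsto_deriv hs hx hg
      (hg'.of_le (by exact_mod_cast Nat.le_add_left 1 m)) (by simpa using hL)
    have hderiv' : ContDiffOn ℝ m (deriv g) (s \ {x}) :=
      ((contDiffOn_succ_iff_deriv_of_isOpen (hs.sdiff isClosed_singleton)).1
        (by exact_mod_cast hg')).2.2
    rw [Nat.cast_succ, contDiffOn_succ_iff_deriv_of_isOpen hs]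
    refine ⟨hC1.differentiableOn one_ne_zero, by simp,
      ih (hC1.continuousOn_deriv_of_isOpen hs le_rfl) hderiv' fun n hn => ?_⟩
    simpa only [iteratedDeriv_succ'] using hlim (n + 1) (by omega)

section WeightedLimits

variable {f : ℝ → E} {s : Set ℝ} {p m : ℕ}

theorem exists_tendsto_pow_smul_iteratedDeriv (hs : IsOpen s) (h0 : 0 ∈ s)
    (hf : ContDiffOn ℝ (m - p : ℕ) f s)
    (hlim : ∀ k ≤ p, ∃ L, Tendsto (fun t : ℝ => t ^ k • iteratedDeriv (m - p + k) f t)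
      (𝓝[≠] 0) (𝓝 L))
    {n j : ℕ} (hn : n ≤ m) (hnj : n + p ≤ m + j) :
    ∃ L, Tendsto (fun t : ℝ => t ^ j • iteratedDeriv n f t) (𝓝[≠] 0) (𝓝 L) := by
  by_cases hnp : n ≤ m - p
  · have hcont : ContinuousOn (iteratedDeriv n f) s :=
      (hf.continuousOn_iteratedDerivWithin (by exact_mod_cast hnp) hs.uniqueDiffOn).congr
        (iteratedDerivWithin_of_isOpen hs).symm
    have hcont0 : ContinuousAt (fun t : ℝ => t ^ j • iteratedDeriv n f t) 0 :=
      (continuous_pow j).continuousAt.smul (hcont.continuousAt (hs.mem_nhds h0))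
    exact ⟨_, hcont0.tendsto.mono_left nhdsWithin_le_nhds⟩
  · obtain ⟨L, hL⟩ := hlim (n - (m - p)) (by omega)
    rw [show m - p + (n - (m - p)) = n by omega] at hL
    refine ⟨(0 : ℝ) ^ (j - (n - (m - p))) • L,
      (((continuous_pow _).tendsto 0).mono_left nhdsWithin_le_nhds).smul hL |>.congr fun t => ?_⟩
    rw [smul_smul, ← pow_add, Nat.sub_add_cancel (by omega)]

theorem exists_tendsto_iteratedDeriv_pow_smul (hs : IsOpen s) (h0 : 0 ∈ s)
    (hf : ContDiffOn ℝ (m - p : ℕ) f s) (hf' : ContDiffOn ℝ m f (s \ {0}))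
    (hlim : ∀ k ≤ p, ∃ L, Tendsto (fun t : ℝ => t ^ k • iteratedDeriv (m - p + k) f t)
      (𝓝[≠] 0) (𝓝 L))
    {n : ℕ} (hn : n ≤ m) :
    ∃ L, Tendsto (iteratedDeriv n fun t : ℝ => t ^ p • f t) (𝓝[≠] 0) (𝓝 L) := by
  have hleibniz : ∀ t ∈ s \ {0}, iteratedDeriv n (fun t : ℝ => t ^ p • f t) t =
      ∑ i ∈ Finset.range (n + 1), ((n.choose i * p.descFactorial i : ℕ) : ℝ) •
        (t ^ (p - i) • iteratedDeriv (n - i) f t) := by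
    intro t ht
    have hft : ContDiffAt ℝ n f t :=
      (hf'.contDiffAt ((hs.sdiff isClosed_singleton).mem_nhds ht)).of_le (by exact_mod_cast hn)
    rw [← iteratedDerivWithin_univ]
    show iteratedDerivWithin n ((fun t : ℝ => t ^ p) • f) univ t = _
    rw [iteratedDerivWithin_smul (f := fun t : ℝ => t ^ p) (mem_univ t) uniqueDiffOn_univ
      (contDiff_id.pow p).contDiffAt.contDiffWithinAt hft.contDiffWithinAt]
    refine Finset.sum_congr rfl fun i _ => ?_
    rw [iteratedDerivWithin_univ, iteratedDerivWithin_univ, iteratedDeriv_pow,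
      ← Nat.cast_smul_eq_nsmul ℝ, smul_smul, smul_smul, Nat.cast_mul, mul_assoc]
  have hterm : ∀ i ∈ Finset.range (n + 1), ∃ L, Tendsto (fun t : ℝ =>
      ((n.choose i * p.descFactorial i : ℕ) : ℝ) • (t ^ (p - i) • iteratedDeriv (n - i) f t))
      (𝓝[≠] 0) (𝓝 L) := by
    intro i hi
    have hin : i ≤ n := Finset.mem_range_succ_iff.1 hi
    obtain ⟨L, hL⟩ := exists_tendsto_pow_smul_iteratedDeriv hs h0 hf hlim (n := n - i) (j := p - i)
      (by omega) (by omega)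
    exact ⟨_, hL.const_smul _⟩
  obtain ⟨L, hL⟩ := exists_tendsto_finset_sum _ hterm
  refine ⟨L, hL.congr' ?_⟩
  filter_upwards [sdiff_mem_nhdsWithin_compl (hs.mem_nhds h0) {0}] with t ht
  exact (hleibniz t ht).symm

end WeightedLimits

theorem pCm_of_characterization_general (a b : ℝ) (h0 : (0 : ℝ) ∈ Ioo a b)
    (p m : ℕ) (f : ℝ → ℂ)
    (h1 : ContDiffOn ℝ (m - p) f (Ioo a b))
    (h2 : ContDiffOn ℝ m f (Ioo a b \ {0}))
    (h3 : ∀ k : ℕ, k ≤ p → ∃ L : ℂ,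
      Filter.Tendsto
        (fun t : ℝ => (t : ℂ) ^ k *
          iteratedDerivWithin (m - p + k) f (Ioo a b \ {0}) t)
        (nhdsWithin 0 (Ioo a b \ {0})) (nhds L)) :
    ContDiffOn ℝ m (fun t : ℝ => (t : ℂ) ^ p * f t) (Ioo a b) := by
  have hf : ContDiffOn ℝ (m - p : ℕ) f (Ioo a b) := by exact_mod_cast h1
  have hnhds : 𝓝[Ioo a b \ {0}] (0 : ℝ) = 𝓝[≠] 0 :=
    nhdsWithin_inter_of_mem (mem_nhdsWithin_of_mem_nhds (isOpen_Ioo.mem_nhds h0))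
  have hlim : ∀ k ≤ p, ∃ L, Tendsto (fun t : ℝ => t ^ k • iteratedDeriv (m - p + k) f t)
      (𝓝[≠] 0) (𝓝 L) := by
    intro k hk
    obtain ⟨L, hL⟩ := h3 k hk
    rw [hnhds] at hL
    refine ⟨L, hL.congr' ?_⟩
    filter_upwards [sdiff_mem_nhdsWithin_compl (isOpen_Ioo.mem_nhds h0) {0}] with t ht
    rw [iteratedDerivWithin_of_isOpen (isOpen_Ioo.sdiff isClosed_singleton) ht,
      Complex.real_smul, Complex.ofReal_pow]
  have hsmul : (fun t : ℝ => (t : ℂ) ^ p * f t) = fun t => t ^ p • f t := by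
    ext t
    rw [Complex.real_smul, Complex.ofReal_pow]
  rw [hsmul]
  exact contDiffOn_of_tendsto_iteratedDeriv isOpen_Ioo h0
    ((continuous_pow p).continuousOn.smul hf.continuousOn)
    ((contDiff_id.pow p).contDiffOn.smul h2)
    fun n hn => exists_tendsto_iteratedDeriv_pow_smul isOpen_Ioo h0 hf h2 hlim hn

theorem pCm_of_characterization (a b : ℝ) (h0 : (0 : ℝ) ∈ Ioo a b)
    (p m : ℕ) (hpm : p ≤ m) (f : ℝ → ℂ)
    (hcont : ContinuousOn f (Ioo a b))
    (h1 : ContDiffOn ℝ (m - p) f (Ioo a b))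
    (h2 : ContDiffOn ℝ m f (Ioo a b \ {0}))
    (h3 : ∀ k : ℕ, k ≤ p → ∃ L : ℂ,
      Filter.Tendsto
        (fun t : ℝ => (t : ℂ) ^ k *
          iteratedDerivWithin (m - p + k) f (Ioo a b \ {0}) t)
        (nhdsWithin 0 (Ioo a b \ {0})) (nhds L)) :
    ContDiffOn ℝ m (fun t : ℝ => (t : ℂ) ^ p * f t) (Ioo a b) :=
  pCm_of_characterization_general a b h0 p m f h1 h2 h3
end
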